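/- arXiv:1412.4100 — 2 statements merged into one kernel-verified Lean document; each statement's English description precedes it below -/
import Mathlib

section
/- If v₀ is any vertex in a tree T with non-negative vertex weights and P = (v₀,…,v_k) is a path of maximum total weight among all paths starting at v₀, then there exists a path of maximum total weight in T (among all paths) that starts at v_k. -/
/-!
Write `F x y` for the weight of the unique path from `x` to `y`. In a tree, `F` satisfies the
four-point condition `F x y + F z t ≤ max (F x z + F y t) (F x t + F y z)`: let `c` be the median
of `x, y, z` and `d` the point where the path from `t` first hits the three legs from `c`; all six
weights then split at `c` and `d`, and one pairing matches `F x y + F z t` exactly unless `d`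
lies on the leg towards `z`, where the surplus is `2 F c d - w c - w d ≥ 0`. With `z = v₀` and `t = v_k`,
maximality of `P` turns this into `F a b ≤ max (F v_k a) (F v_k b)`, so a heaviest path starting
at `v_k` is a heaviest path.
-/

/-- The weight of a walk: sum of the weights of its vertices. -/
def walkWeight {V : Type*} {G : SimpleGraph V} (w : V → ℝ) {u v : V}
    (p : G.Walk u v) : ℝ := (p.support.map w).sum

namespace SimpleGraph

variable {V : Type*} {G : SimpleGraph V}

lemma walkWeight_reverse (w : V → ℝ) {u v : V} (p : G.Walk u v) :
    walkWeight w p.reverse = walkWeight w p := by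
  simp [walkWeight, Walk.support_reverse]

lemma walkWeight_append (w : V → ℝ) {u v x : V} (p : G.Walk u v) (q : G.Walk v x) :
    walkWeight w (p.append q) = walkWeight w p + walkWeight w q - w v := by
  rw [walkWeight, walkWeight, walkWeight, Walk.support_append, ← q.cons_tail_support]
  simp only [List.tail_cons, List.map_append, List.map_cons, List.sum_append, List.sum_cons]
  ring

lemma le_walkWeight {w : V → ℝ} (hw : ∀ v, 0 ≤ w v) {u v x : V} (p : G.Walk u v)
    (hx : x ∈ p.support) : w x ≤ walkWeight w p :=
  List.single_le_sum (by simpa using fun y _ => hw y) _ (List.mem_map_of_mem hx)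

namespace Walk

lemma IsPath.append {u v x : V} {p : G.Walk u v} {q : G.Walk v x} (hp : p.IsPath)
    (hq : q.IsPath) (h : ∀ y ∈ p.support, y ∈ q.support → y = v) : (p.append q).IsPath := by
  rw [isPath_def, support_append, List.nodup_append]
  refine ⟨hp.support_nodup, hq.support_nodup.tail, fun y hyp z hzq hyz => ?_⟩
  subst hyz
  have hyv : y = v := h y hyp (List.mem_of_mem_tail hzq)
  subst hyv
  have hnd := hq.support_nodup
  rw [← q.cons_tail_support] at hnd
  exact (List.nodup_cons.1 hnd).1 hzq

lemma exists_walk_first_hit (S : Set V) {u v : V} (p : G.Walk u v) (hv : v ∈ S) :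
    ∃ m ∈ S, ∃ q : G.Walk u m, ∀ y ∈ q.support, y ∈ S → y = m := by
  induction p with
  | nil => exact ⟨_, hv, nil, by simp⟩
  | @cons u _ _ h p ih =>
    by_cases hu : u ∈ S
    · exact ⟨u, hu, nil, by simp⟩
    · obtain ⟨m, hm, q, hq⟩ := ih hv
      refine ⟨m, hm, cons h q, fun y hy hyS => ?_⟩
      rcases List.mem_cons.1 (support_cons h q ▸ hy) with rfl | hy
      · exact absurd hyS hu
      · exact hq y hy hyS

end Walk

namespace IsTree

variable (hT : G.IsTree)

noncomputable def path (x y : V) : G.Walk x y := (hT.existsUnique_path x y).choose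

lemma isPath_path (x y : V) : (hT.path x y).IsPath := (hT.existsUnique_path x y).choose_spec.1

lemma path_unique {x y : V} {p : G.Walk x y} (hp : p.IsPath) : p = hT.path x y :=
  (hT.existsUnique_path x y).choose_spec.2 p hp

lemma reverse_path (x y : V) : (hT.path x y).reverse = hT.path y x :=
  hT.path_unique (hT.isPath_path x y).reverse

lemma walkWeight_path_comm (w : V → ℝ) (x y : V) :
    walkWeight w (hT.path x y) = walkWeight w (hT.path y x) := by
  rw [← reverse_path, walkWeight_reverse]

def Between (x m y : V) : Prop := m ∈ (hT.path x y).support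

lemma between_self_left (x y : V) : hT.Between x x y := (hT.path x y).start_mem_support

variable {hT} {x y z m : V}

lemma Between.symm (h : hT.Between x m y) : hT.Between y m x := by
  rwa [Between, ← reverse_path, Walk.support_reverse, List.mem_reverse]

lemma Between.path_eq_append (h : hT.Between x m y) :
    hT.path x y = (hT.path x m).append (hT.path m y) := by
  obtain ⟨p, q, hp, hq, hpq⟩ := (hT.isPath_path x y).mem_support_iff_exists_append.1 h
  rw [hpq, hT.path_unique hp, hT.path_unique hq]

lemma Between.walkWeight_path (w : V → ℝ) (h : hT.Between x m y) :
    walkWeight w (hT.path x y) =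
      walkWeight w (hT.path x m) + walkWeight w (hT.path m y) - w m := by
  rw [h.path_eq_append, walkWeight_append]

lemma Between.trans_left (h₁ : hT.Between x z y) (h₂ : hT.Between x m z) :
    hT.Between x m y := by
  rw [Between, h₁.path_eq_append]
  exact Walk.support_subset_support_append_left _ _ h₂

lemma Between.trans_left_right (h₁ : hT.Between x z y) (h₂ : hT.Between x m z) :
    hT.Between m z y := by
  have hp := hT.isPath_path x y
  rw [h₁.path_eq_append, h₂.path_eq_append, ← Walk.append_assoc] at hp
  rw [Between, ← hT.path_unique hp.of_append_right]
  exact Walk.support_subset_support_append_right _ _ (hT.path z y).start_mem_support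

lemma Between.trans_right (h₁ : hT.Between x z y) (h₂ : hT.Between z m y) :
    hT.Between x m y :=
  (h₁.symm.trans_left h₂.symm).symm

lemma Between.left_or_right (h : hT.Between x m y) (hz : hT.Between x z y) :
    hT.Between x z m ∨ hT.Between m z y := by
  rwa [Between, h.path_eq_append, Walk.mem_support_append_iff] at hz

lemma between_of_first_hit (S : Set V) (hm : ∀ u ∈ (hT.path x m).support, u ∈ S → u = m)
    (hy : ∀ u ∈ (hT.path m y).support, u ∈ S) : hT.Between x m y := by
  have hp := (hT.isPath_path x m).append (hT.isPath_path m y) fun u hu hu' => hm u hu (hy u hu')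
  rw [Between, ← hT.path_unique hp]
  exact Walk.support_subset_support_append_right _ _ (hT.path m y).start_mem_support

variable (hT)

lemma exists_first_hit (S : Set V) (hy : y ∈ S) (x : V) :
    ∃ m ∈ S, ∀ u ∈ (hT.path x m).support, u ∈ S → u = m := by
  classical
  obtain ⟨m, hm, q, hq⟩ := (hT.path x y).exists_walk_first_hit S hy
  refine ⟨m, hm, fun u hu huS => hq u ?_ huS⟩
  rw [← hT.path_unique q.bypass_isPath] at hu
  exact q.support_bypass_subset_support hu

lemma exists_median (x y z : V) :
    ∃ c, hT.Between x c y ∧ hT.Between z c x ∧ hT.Between z c y := by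
  obtain ⟨c, hxy, hc⟩ := hT.exists_first_hit {u | hT.Between x u y} (hT.between_self_left x y) z
  exact ⟨c, hxy, between_of_first_hit _ hc fun u hu => hxy.trans_left (Between.symm hu),
    between_of_first_hit _ hc fun u hu => hxy.trans_right hu⟩

variable {hT} in
lemma between_of_first_hit_leg {c d t ℓ ℓ' : V} (hℓ : hT.Between ℓ c ℓ')
    (hd : hT.Between c d ℓ)
    (ht : ∀ u ∈ (hT.path t d).support, hT.Between c u ℓ ∨ hT.Between c u ℓ' → u = d) :
    hT.Between t d ℓ ∧ hT.Between d c ℓ' ∧ hT.Between t d ℓ' := by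
  have hdc : hT.Between d c ℓ' := hℓ.trans_left_right hd.symm
  refine ⟨between_of_first_hit {u | hT.Between c u ℓ ∨ hT.Between c u ℓ'} ht
    (fun u hu => Or.inl (hd.trans_right hu)), hdc, between_of_first_hit _ ht fun u hu => ?_⟩
  rcases hdc.left_or_right hu with hu | hu
  · exact Or.inl (hd.trans_left hu.symm)
  · exact Or.inr hu

theorem walkWeight_path_add_le_max {w : V → ℝ} (hw : ∀ v, 0 ≤ w v) (x y z t : V) :
    walkWeight w (hT.path x y) + walkWeight w (hT.path z t) ≤
      max (walkWeight w (hT.path x z) + walkWeight w (hT.path y t))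
        (walkWeight w (hT.path x t) + walkWeight w (hT.path y z)) := by
  obtain ⟨c, hxy, hzx, hzy⟩ := hT.exists_median x y z
  obtain ⟨d, hd, hfirst⟩ := hT.exists_first_hit
    {u | hT.Between c u x ∨ hT.Between c u y ∨ hT.Between c u z}
    (Or.inl (hT.between_self_left c x)) t
  have split {a m b : V} (h : hT.Between a m b) := h.walkWeight_path w
  have comm := hT.walkWeight_path_comm w
  rcases hd with hdx | hdy | hdz
  · obtain ⟨-, hcy, hty⟩ :=
      between_of_first_hit_leg hxy hdx fun u hu h => hfirst u hu (by tauto)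
    obtain ⟨-, hcz, htz⟩ :=
      between_of_first_hit_leg hzx.symm hdx fun u hu h => hfirst u hu (by tauto)
    refine le_max_of_le_left ?_
    linarith [split hxy, split hzx.symm, split hty, split hcy, split htz, split hcz,
      comm z t, comm y t]
  · obtain ⟨-, hcx, htx⟩ :=
      between_of_first_hit_leg hxy.symm hdy fun u hu h => hfirst u hu (by tauto)
    obtain ⟨-, hcz, htz⟩ :=
      between_of_first_hit_leg hzy.symm hdy fun u hu h => hfirst u hu (by tauto)
    refine le_max_of_le_right ?_
    linarith [split hxy, split hzy.symm, split htx, split hcx, split htz, split hcz,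
      comm z t, comm x t, comm c x, comm c y]
  · obtain ⟨htz, hcy, hty⟩ :=
      between_of_first_hit_leg hzy hdz fun u hu h => hfirst u hu (by tauto)
    refine le_max_of_le_left ?_
    linarith [split hxy, split hzx.symm, split hdz, split htz, split hty, split hcy,
      comm z t, comm y t, comm c d, le_walkWeight hw _ (hT.path c d).start_mem_support,
      le_walkWeight hw _ (hT.path c d).end_mem_support]

end IsTree

end SimpleGraph

theorem stmt_0 {V : Type*} [Fintype V] (T : SimpleGraph V) (hT : T.IsTree)
    (w : V → ℝ) (hw : ∀ v, 0 ≤ w v) (v₀ vk : V) (P : T.Walk v₀ vk)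
    (hP : P.IsPath)
    (hmax : ∀ (u : V) (Q : T.Walk v₀ u), Q.IsPath → walkWeight w Q ≤ walkWeight w P) :
    ∃ (u : V) (Q : T.Walk vk u), Q.IsPath ∧
      ∀ (a b : V) (R : T.Walk a b), R.IsPath → walkWeight w R ≤ walkWeight w Q := by
  have : Nonempty V := ⟨v₀⟩
  obtain ⟨u, hu⟩ := Finite.exists_max fun u => walkWeight w (hT.path vk u)
  refine ⟨u, hT.path vk u, hT.isPath_path vk u, fun a b R hR => ?_⟩
  have hmax' (v : V) : walkWeight w (hT.path v₀ v) ≤ walkWeight w (hT.path v₀ vk) :=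
    hT.path_unique hP ▸ hmax v _ (hT.isPath_path v₀ v)
  have comm := hT.walkWeight_path_comm w
  rw [hT.path_unique hR]
  obtain h | h := le_max_iff.1 (hT.walkWeight_path_add_le_max hw a b v₀ vk)
  · linarith [hmax' a, comm a v₀, comm b vk, hu b]
  · linarith [hmax' b, comm b v₀, comm a vk, hu a]
end

section
/- In any finite tree T with vertex set V and a function B : V → V such that B(u) ≠ u for all u, there exists an edge {a, b} of T such that B(a) lies in the component of T − a containing b and B(b) lies in the component of T − b containing a. -/
/-!
Every vertex `u` points to the neighbour through which the path from `u` to `B u` leaves `u`.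
These `|V|` choices are edges of `T`, and a tree has only `|V| - 1` edges, so two vertices
choose the same edge; they are then its two endpoints, each pointing at the other.
-/

namespace SimpleGraph

variable {V : Type*} {G : SimpleGraph V}

lemma Preconnected.exists_adj_reachable_induce_ne (hG : G.Preconnected) {u v : V}
    (hvu : v ≠ u) :
    ∃ (w : V) (huw : G.Adj u w), (G.induce {x | x ≠ u}).Reachable ⟨w, huw.ne'⟩ ⟨v, hvu⟩ := by
  classical
  obtain ⟨p, hp⟩ := (hG u v).some.toPath
  cases p with
  | nil => exact absurd rfl hvu
  | @cons _ w _ huw q =>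
    have hq : ∀ x ∈ q.support, x ∈ {x | x ≠ u} := fun x hx hxu =>
      (Walk.cons_isPath_iff huw q).mp hp |>.2 (hxu ▸ hx)
    exact ⟨w, huw, ⟨q.induce _ hq⟩⟩

lemma IsTree.exists_rel_and_rel_flip [Finite V] (hG : G.IsTree) {R : V → V → Prop}
    (hRG : ∀ u v, R u v → G.Adj u v) (hR : ∀ u, ∃ v, R u v) : ∃ a b, R a b ∧ R b a := by
  choose f hf using hR
  let e : V → G.edgeSet := fun u => ⟨s(u, f u), hRG u (f u) (hf u)⟩
  have hcard : Nat.card G.edgeSet < Nat.card V := by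
    have := (isTree_iff_connected_and_card.mp hG).2
    omega
  obtain ⟨a, b, heq, hab⟩ := Function.not_injective_iff.mp
    fun he => (Nat.card_le_card_of_injective e he).not_gt hcard
  rcases Sym2.eq_iff.mp (congrArg Subtype.val heq) with ⟨rfl, -⟩ | ⟨hafb, hfab⟩
  · exact absurd rfl hab
  · exact ⟨a, b, hfab ▸ hf a, hafb ▸ hf b⟩

end SimpleGraph

open SimpleGraph

theorem stmt_16 {V : Type*} [Fintype V] (T : SimpleGraph V) (hT : T.IsTree)
    (B : V → V) (hB : ∀ u, B u ≠ u) :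
    ∃ (a b : V) (hab : T.Adj a b),
      (T.induce {x | x ≠ a}).Reachable ⟨b, hab.ne'⟩ ⟨B a, hB a⟩ ∧
      (T.induce {x | x ≠ b}).Reachable ⟨a, hab.ne⟩ ⟨B b, hB b⟩ := by
  obtain ⟨a, b, ⟨hab, hreach_a⟩, ⟨_, hreach_b⟩⟩ :=
    hT.exists_rel_and_rel_flip (R := fun u w => ∃ huw : T.Adj u w,
      (T.induce {x | x ≠ u}).Reachable ⟨w, huw.ne'⟩ ⟨B u, hB u⟩)
      (fun _ _ ⟨huw, _⟩ => huw)
      (fun u => hT.connected.preconnected.exists_adj_reachable_induce_ne (hB u))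
  exact ⟨a, b, hab, hreach_a, hreach_b⟩
end
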